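/- arXiv:1304.5366 — 8 statements merged into one kernel-verified Lean document; each statement's English description precedes it below -/
import Mathlib

section
/- Let p ≥ 2 and f as in the change of variables, i.e., f'(t) = (1 + 2^{p-1} f(t)^p)^{-1/p} on [0,∞), f(0)=0, f odd. Then |f(t)| ≤ 2^{1/(2p)} |t|^{1/2} for all t ∈ ℝ. -/
/-!
Squaring turns the differential inequality into a linear one: since
`f' ≤ (2^(p-1) f^p)^(-1/p) = 2^(1/p - 1) / f` wherever `f > 0`, we get `(f²)' = 2 f f' ≤ 2^(1/p)`,
hence `f(t)² ≤ 2^(1/p) t` for `t ≥ 0`, and oddness gives the bound for `t < 0`.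
-/

open Real

theorem mul_one_add_mul_abs_rpow_rpow_neg_le {p a : ℝ} (hp : 0 < p) (ha : 0 < a) (x : ℝ) :
    x * (1 + a * |x| ^ p) ^ (-(1 / p)) ≤ a ^ (-(1 / p)) := by
  rcases le_or_gt x 0 with hx | hx
  · have : 0 ≤ (1 + a * |x| ^ p) ^ (-(1 / p)) := by positivity
    nlinarith [rpow_pos_of_pos ha (-(1 / p))]
  · rw [abs_of_pos hx]
    have hax : 0 < a * x ^ p := by positivity
    calc x * (1 + a * x ^ p) ^ (-(1 / p))
        ≤ x * (a * x ^ p) ^ (-(1 / p)) := by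
          refine mul_le_mul_of_nonneg_left (rpow_le_rpow_of_nonpos hax ?_ ?_) hx.le
          · exact le_add_of_nonneg_left zero_le_one
          · exact neg_nonpos.mpr (by positivity)
      _ = a ^ (-(1 / p)) := by
          rw [mul_rpow ha.le (by positivity), ← rpow_mul hx.le,
            show p * -(1 / p) = -1 by field_simp, rpow_neg_one]
          field_simp

theorem sq_sub_sq_le_of_two_mul_hasDerivAt_le {f f' : ℝ → ℝ} {C : ℝ}
    (hf : ∀ t, HasDerivAt f (f' t) t) (hC : ∀ t, 2 * f t * f' t ≤ C) {x y : ℝ} (hxy : x ≤ y) :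
    f y ^ 2 - f x ^ 2 ≤ C * (y - x) := by
  have hsq : ∀ t, HasDerivAt (fun s => f s ^ 2) (2 * f t * f' t) t := fun t => by
    simpa using (hf t).fun_pow 2
  exact image_sub_le_mul_sub_of_deriv_le (fun t => (hsq t).differentiableAt)
    (fun t => (hsq t).deriv ▸ hC t) hxy

/-- `|f t| ≤ 2^(1/(2p)) |t|^(1/2)` for all `t`. -/
theorem stmt1 (p : ℝ) (hp : 2 ≤ p) (f : ℝ → ℝ)
    (hodd : ∀ t : ℝ, f (-t) = - f t)
    (hf0 : f 0 = 0)
    (hf' : ∀ t : ℝ, HasDerivAt f ((1 + 2 ^ (p - 1) * |f t| ^ p) ^ (-(1 / p))) t) :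
    ∀ t : ℝ, |f t| ≤ 2 ^ (1 / (2 * p)) * |t| ^ ((1 : ℝ) / 2) := by
  have hp0 : 0 < p := by linarith
  have hconst : 2 * ((2 : ℝ) ^ (p - 1)) ^ (-(1 / p)) = 2 ^ (1 / p) := by
    have hexp : 1 + (p - 1) * -(1 / p) = 1 / p := by
      field_simp
      ring
    rw [← rpow_mul zero_le_two, ← rpow_one_add' zero_le_two (by rw [hexp]; positivity), hexp]
  have hsq_nonneg : ∀ t, 0 ≤ t → f t ^ 2 ≤ 2 ^ (1 / p) * t := fun t ht => by
    have := sq_sub_sq_le_of_two_mul_hasDerivAt_le (C := 2 ^ (1 / p)) hf' (fun s => by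
      rw [← hconst, mul_assoc]
      gcongr
      exact mul_one_add_mul_abs_rpow_rpow_neg_le hp0 (by positivity) (f s)) ht
    simpa [hf0] using this
  have hsq : ∀ t, f t ^ 2 ≤ 2 ^ (1 / p) * |t| := fun t => by
    rcases le_total 0 t with ht | ht
    · simpa [abs_of_nonneg ht] using hsq_nonneg t ht
    · simpa [abs_of_nonpos ht, hodd] using hsq_nonneg (-t) (by linarith)
  intro t
  calc |f t| ≤ √(2 ^ (1 / p) * |t|) := abs_le_sqrt (hsq t)
    _ = 2 ^ (1 / (2 * p)) * |t| ^ ((1 : ℝ) / 2) := by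
      rw [sqrt_mul (by positivity), sqrt_eq_rpow, sqrt_eq_rpow, ← rpow_mul zero_le_two]
      congr 2
      field_simp
end

section
/- Let p ≥ 2 and f as in the change of variables. Then for all t ≥ 0, f(t)/2 ≤ t f'(t) ≤ f(t). -/
/-!
With `w y = (1 + c |y| ^ p) ^ (-1/p)` the equation reads `f' = w ∘ f`, so `f` increases and
`f ≥ 0` on `[0, ∞)`. On `[0, ∞)` the weight `w` decreases, while `y * w y` increases because
`(y * w y) ^ p = y ^ p / (1 + c y ^ p)`. Hence `f'` decreases on `[0, t]`, so `f` lies above its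
tangent at `t` and `t f'(t) ≤ f(t)`; and `(f² / 2)' = f f'` increases on `[0, t]`, so
`f(t)² / 2 ≤ t f(t) f'(t)`.
-/

open Set

theorem mul_sub_le_sub_of_antitoneOn_deriv {f f' : ℝ → ℝ} {a b : ℝ} (hab : a ≤ b)
    (hf : ∀ x ∈ Icc a b, HasDerivAt f (f' x) x) (hf' : AntitoneOn f' (Icc a b)) :
    f' b * (b - a) ≤ f b - f a := by
  have hb : b ∈ Icc a b := ⟨hab, le_rfl⟩
  refine (convex_Icc a b).mul_sub_le_image_sub_of_le_deriv
    (fun x hx => (hf x hx).continuousAt.continuousWithinAt)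
    (fun x hx => (hf x (interior_subset hx)).differentiableAt.differentiableWithinAt)
    (fun x hx => ?_) a ⟨le_rfl, hab⟩ b hb hab
  rw [(hf x (interior_subset hx)).deriv]
  exact hf' (interior_subset hx) hb (interior_subset hx).2

theorem sub_le_mul_sub_of_monotoneOn_deriv {f f' : ℝ → ℝ} {a b : ℝ} (hab : a ≤ b)
    (hf : ∀ x ∈ Icc a b, HasDerivAt f (f' x) x) (hf' : MonotoneOn f' (Icc a b)) :
    f b - f a ≤ f' b * (b - a) := by
  have := mul_sub_le_sub_of_antitoneOn_deriv hab (fun x hx => (hf x hx).neg) hf'.neg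
  simp only [Pi.neg_apply] at this
  linarith

theorem mul_rpow_neg_one_div_eq_div_rpow {y X p : ℝ} (hy : 0 ≤ y) (hX : 0 ≤ X)
    (hp : p ≠ 0) :
    y * X ^ (-(1 / p)) = (y ^ p / X) ^ (1 / p) := by
  rw [Real.div_rpow (by positivity) hX, one_div, Real.rpow_rpow_inv hy hp, Real.rpow_neg hX,
    div_eq_mul_inv]

section Weight

variable {c p : ℝ}

theorem antitoneOn_one_add_mul_abs_rpow_rpow_neg (hc : 0 ≤ c) (hp : 0 < p) :
    AntitoneOn (fun y : ℝ => (1 + c * |y| ^ p) ^ (-(1 / p))) (Ici 0) := by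
  intro a ha b hb hab
  have hab' : |a| ^ p ≤ |b| ^ p := by
    rw [abs_of_nonneg ha, abs_of_nonneg hb]
    exact Real.rpow_le_rpow ha hab hp.le
  refine Real.rpow_le_rpow_of_nonpos (by positivity) ?_ (by simp [hp.le])
  gcongr

theorem monotoneOn_mul_one_add_mul_abs_rpow_rpow_neg (hc : 0 ≤ c) (hp : 0 < p) :
    MonotoneOn (fun y : ℝ => y * (1 + c * |y| ^ p) ^ (-(1 / p))) (Ici 0) := by
  intro a ha b hb hab
  simp only [abs_of_nonneg (mem_Ici.1 ha), abs_of_nonneg (mem_Ici.1 hb)]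
  have hap : 0 ≤ a ^ p := Real.rpow_nonneg ha _
  have hab' : a ^ p ≤ b ^ p := Real.rpow_le_rpow ha hab hp.le
  have hXa : 0 < 1 + c * a ^ p := by nlinarith
  have hXb : 0 < 1 + c * b ^ p := by nlinarith
  rw [mul_rpow_neg_one_div_eq_div_rpow ha hXa.le hp.ne',
    mul_rpow_neg_one_div_eq_div_rpow hb hXb.le hp.ne']
  refine Real.rpow_le_rpow (by positivity) ?_ (by positivity)
  rw [div_le_div_iff₀ hXa hXb]
  nlinarith

end Weight

theorem stmt2_general (p : ℝ) (hp : 2 ≤ p) (f : ℝ → ℝ)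
    (hf0 : f 0 = 0)
    (hf' : ∀ t : ℝ, HasDerivAt f ((1 + 2 ^ (p - 1) * |f t| ^ p) ^ (-(1 / p))) t) :
    ∀ t : ℝ, 0 ≤ t → f t / 2 ≤ t * deriv f t ∧ t * deriv f t ≤ f t := by
  have hp0 : 0 < p := by linarith
  have hc : (0 : ℝ) ≤ 2 ^ (p - 1) := by positivity
  set w : ℝ → ℝ := fun y => (1 + 2 ^ (p - 1) * |y| ^ p) ^ (-(1 / p))
  have hf_mono : Monotone f := monotone_of_hasDerivAt_nonneg hf' fun t => by positivity
  intro t ht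
  have hf_nonneg : MapsTo f (Icc 0 t) (Ici 0) := fun s hs => hf0 ▸ hf_mono hs.1
  have hw_anti := (antitoneOn_one_add_mul_abs_rpow_rpow_neg hc hp0).comp_MonotoneOn
    (hf_mono.monotoneOn _) hf_nonneg
  have hfw_mono := (monotoneOn_mul_one_add_mul_abs_rpow_rpow_neg hc hp0).comp
    (hf_mono.monotoneOn _) hf_nonneg
  have hupper := mul_sub_le_sub_of_antitoneOn_deriv ht (fun s _ => hf' s) hw_anti
  have hsq (s : ℝ) : HasDerivAt (fun s => f s ^ 2 / 2) (f s * w (f s)) s :=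
    (((hf' s).fun_pow 2).div_const 2).congr_deriv (by ring)
  have hlower := sub_le_mul_sub_of_monotoneOn_deriv ht (fun s _ => hsq s) hfw_mono
  simp only [hf0, sub_zero] at hupper hlower
  rw [(hf' t).deriv]
  refine ⟨?_, by linarith⟩
  obtain hft | hft := (mem_Ici.1 (hf_nonneg ⟨ht, le_rfl⟩)).eq_or_lt
  · rw [← hft, zero_div]
    positivity
  · refine le_of_mul_le_mul_left ?_ hft
    linarith

/-- `f(t)/2 ≤ t f'(t) ≤ f(t)` for all `t ≥ 0`. -/
theorem stmt2 (p : ℝ) (hp : 2 ≤ p) (f : ℝ → ℝ)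
    (hodd : ∀ t : ℝ, f (-t) = - f t)
    (hf0 : f 0 = 0)
    (hf' : ∀ t : ℝ, HasDerivAt f ((1 + 2 ^ (p - 1) * |f t| ^ p) ^ (-(1 / p))) t) :
    ∀ t : ℝ, 0 ≤ t → f t / 2 ≤ t * deriv f t ∧ t * deriv f t ≤ f t :=
  stmt2_general p hp f hf0 hf'
end

section
/- Let p ≥ 2 and f as in the change of variables. Then |f(t) f'(t)| ≤ 1/2^{(p-1)/p} for all t ∈ ℝ. -/
/-- `|f(t) f'(t)| ≤ 1 / 2^((p-1)/p)` for all `t`. -/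
theorem stmt3 (p : ℝ) (hp : 2 ≤ p) (f : ℝ → ℝ)
    (hodd : ∀ t : ℝ, f (-t) = - f t)
    (hf0 : f 0 = 0)
    (hf' : ∀ t : ℝ, HasDerivAt f ((1 + 2 ^ (p - 1) * |f t| ^ p) ^ (-(1 / p))) t) :
    ∀ t : ℝ, |f t * deriv f t| ≤ 1 / 2 ^ ((p - 1) / p) := by
  intro t
  have hp0 : (0:ℝ) < p := by linarith
  set s := |f t| with hsdef
  have hs : 0 ≤ s := abs_nonneg _
  have h2 : (0:ℝ) < (2:ℝ) ^ (p - 1) := Real.rpow_pos_of_pos (by norm_num) _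
  have hsp : (0:ℝ) ≤ s ^ p := Real.rpow_nonneg hs p
  have hA : (0:ℝ) < 1 + 2 ^ (p - 1) * s ^ p := by nlinarith
  have hd : deriv f t = (1 + 2 ^ (p - 1) * s ^ p) ^ (-(1 / p)) := (hf' t).deriv
  have hpos : (0:ℝ) < (1 + 2 ^ (p - 1) * s ^ p) ^ (-(1 / p)) :=
    Real.rpow_pos_of_pos hA _
  rw [hd, abs_mul, abs_of_pos hpos, ← hsdef]
  set A := 1 + 2 ^ (p - 1) * s ^ p with hAdef
  have key : s ≤ (A / 2 ^ (p - 1)) ^ (1 / p) := by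
    have h1 : s ^ p ≤ A / 2 ^ (p - 1) := by
      rw [le_div_iff₀ h2]; nlinarith
    calc s = (s ^ p) ^ (1 / p) := by
            rw [← Real.rpow_mul hs, mul_one_div, div_self hp0.ne', Real.rpow_one]
      _ ≤ (A / 2 ^ (p - 1)) ^ (1 / p) :=
            Real.rpow_le_rpow hsp h1 (by positivity)
  have hdiv : (A / 2 ^ (p - 1)) ^ (1 / p)
      = A ^ (1 / p) / (2:ℝ) ^ ((p - 1) / p) := by
    rw [Real.div_rpow hA.le h2.le, ← Real.rpow_mul (by norm_num : (0:ℝ) ≤ 2)]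
    ring_nf
  rw [hdiv] at key
  have h2p : (0:ℝ) < (2:ℝ) ^ ((p - 1) / p) := Real.rpow_pos_of_pos (by norm_num) _
  have hmul : s * A ^ (-(1 / p)) ≤ (A ^ (1 / p) / 2 ^ ((p - 1) / p)) * A ^ (-(1 / p)) :=
    mul_le_mul_of_nonneg_right key (Real.rpow_pos_of_pos hA _).le
  calc s * A ^ (-(1 / p)) ≤ (A ^ (1 / p) / 2 ^ ((p - 1) / p)) * A ^ (-(1 / p)) := hmul
    _ = (A ^ (1 / p) * A ^ (-(1 / p))) / 2 ^ ((p - 1) / p) := by ring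
    _ = 1 / 2 ^ ((p - 1) / p) := by
        rw [← Real.rpow_add hA, add_neg_cancel, Real.rpow_zero]
end

section
/- Let p ≥ 2 and f as in the change of variables. The function Q(t) = |f(t)|^p is convex on ℝ. Consequently, (|f(t)|^{p-2} f(t) f'(t) − |f(s)|^{p-2} f(s) f'(s)) (t − s) ≥ 0 for all t, s ∈ ℝ. -/
open Real

/-- Derivative of `|x|^p` for `p ≥ 2`. -/
lemma absRpow_hasDerivAt (p : ℝ) (hp : 2 ≤ p) (x : ℝ) :
    HasDerivAt (fun x : ℝ => |x| ^ p) (p * |x| ^ (p - 2) * x) x := by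
  have key : ∀ y : ℝ, ∀ q : ℝ, ((y ^ 2 : ℝ)) ^ (q / 2) = |y| ^ q := by
    intro y q
    rw [← sq_abs y, ← Real.rpow_natCast |y| 2, ← Real.rpow_mul (abs_nonneg y)]
    congr 1
    push_cast; ring
  have heq : (fun x : ℝ => |x| ^ p) = fun x : ℝ => ((x ^ 2 : ℝ)) ^ (p / 2) := by
    funext y; rw [key y p]
  rw [heq]
  have h1 : HasDerivAt (fun x : ℝ => (x : ℝ) ^ 2) (2 * x) x := by
    simpa using hasDerivAt_pow 2 x
  have h2 : (1 : ℝ) ≤ p / 2 := by linarith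
  have := h1.rpow_const (p := p / 2) (Or.inr h2)
  convert this using 1
  have : ((x ^ 2 : ℝ)) ^ (p / 2 - 1) = |x| ^ (p - 2) := by
    have := key x (p - 2)
    rw [show p / 2 - 1 = (p - 2) / 2 by ring, this]
  rw [this]; ring

/-- The core inequality: monotonicity of `u ↦ u^(p-1) (1+c u^p)^(-1/p)` on positives. -/
lemma core_ineq (p : ℝ) (hp : 2 ≤ p) {c a b : ℝ} (hc : 0 < c) (ha : 0 < a) (hab : a ≤ b) :
    a ^ (p - 1) * (1 + c * a ^ p) ^ (-(1 / p)) ≤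
      b ^ (p - 1) * (1 + c * b ^ p) ^ (-(1 / p)) := by
  have hp0 : (0 : ℝ) < p := by linarith
  have hb : 0 < b := lt_of_lt_of_le ha hab
  have hGa : (0 : ℝ) < 1 + c * a ^ p := by positivity
  have hGb : (0 : ℝ) < 1 + c * b ^ p := by positivity
  have hX : (0 : ℝ) ≤ a ^ (p - 1) * (1 + c * a ^ p) ^ (-(1 / p)) := by positivity
  have hY : (0 : ℝ) ≤ b ^ (p - 1) * (1 + c * b ^ p) ^ (-(1 / p)) := by positivity
  rw [← Real.rpow_le_rpow_iff hX hY hp0]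
  have expand : ∀ y : ℝ, 0 < y →
      (y ^ (p - 1) * (1 + c * y ^ p) ^ (-(1 / p))) ^ p
        = y ^ ((p - 1) * p) * (1 + c * y ^ p)⁻¹ := by
    intro y hy
    have hGy : (0 : ℝ) < 1 + c * y ^ p := by positivity
    rw [Real.mul_rpow (by positivity) (by positivity),
      ← Real.rpow_mul hy.le, ← Real.rpow_mul hGy.le,
      show -(1 / p) * p = -1 by field_simp, Real.rpow_neg_one]
  rw [expand a ha, expand b hb, ← div_eq_mul_inv, ← div_eq_mul_inv,
    div_le_div_iff₀ hGa hGb]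
  · -- a^((p-1)p) * (1 + c b^p) ≤ b^((p-1)p) * (1 + c a^p)
    have h1 : a ^ ((p - 1) * p) ≤ b ^ ((p - 1) * p) :=
      Real.rpow_le_rpow ha.le hab (by nlinarith)
    have h2 : a ^ ((p - 1) * p) * b ^ p ≤ b ^ ((p - 1) * p) * a ^ p := by
      have hsplit : ∀ y : ℝ, 0 < y → y ^ ((p - 1) * p) = y ^ (p * (p - 2)) * y ^ p := by
        intro y hy
        rw [← Real.rpow_add hy]; ring_nf
      rw [hsplit a ha, hsplit b hb]
      have h3 : a ^ (p * (p - 2)) ≤ b ^ (p * (p - 2)) :=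
        Real.rpow_le_rpow ha.le hab (by nlinarith)
      have hap : (0 : ℝ) ≤ a ^ p := by positivity
      have hbp : (0 : ℝ) ≤ b ^ p := by positivity
      calc a ^ (p * (p - 2)) * a ^ p * b ^ p ≤ b ^ (p * (p - 2)) * a ^ p * b ^ p := by
            apply mul_le_mul_of_nonneg_right (mul_le_mul_of_nonneg_right h3 hap) hbp
        _ = b ^ (p * (p - 2)) * b ^ p * a ^ p := by ring
    calc a ^ ((p - 1) * p) * (1 + c * b ^ p)
        = a ^ ((p - 1) * p) + c * (a ^ ((p - 1) * p) * b ^ p) := by ring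
      _ ≤ b ^ ((p - 1) * p) + c * (b ^ ((p - 1) * p) * a ^ p) := by nlinarith
      _ = b ^ ((p - 1) * p) * (1 + c * a ^ p) := by ring

/-- Monotonicity of `H u = |u|^(p-2) u (1 + c|u|^p)^(-1/p)`. -/
lemma H_mono (p : ℝ) (hp : 2 ≤ p) {c : ℝ} (hc : 0 < c) :
    Monotone (fun u : ℝ => |u| ^ (p - 2) * u * (1 + c * |u| ^ p) ^ (-(1 / p))) := by
  set H : ℝ → ℝ := fun u => |u| ^ (p - 2) * u * (1 + c * |u| ^ p) ^ (-(1 / p)) with hH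
  have hpos : ∀ u : ℝ, 0 < u → H u = u ^ (p - 1) * (1 + c * u ^ p) ^ (-(1 / p)) := by
    intro u hu
    simp only [hH, abs_of_pos hu]
    rw [show p - 1 = (p - 2) + 1 by ring, Real.rpow_add_one hu.ne']
  have hodd : ∀ u : ℝ, H (-u) = - H u := by
    intro u; simp only [hH, abs_neg]; ring
  have hzero : H 0 = 0 := by simp [hH]
  have hsign : ∀ u : ℝ, 0 ≤ u → 0 ≤ H u := by
    intro u hu
    have : (0:ℝ) < 1 + c * |u| ^ p := by positivity
    exact mul_nonneg (mul_nonneg (Real.rpow_nonneg (abs_nonneg u) _) hu)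
      (Real.rpow_pos_of_pos this _).le
  have hnn : ∀ a b : ℝ, 0 ≤ a → a ≤ b → H a ≤ H b := by
    intro a b ha hab
    rcases eq_or_lt_of_le ha with h | h
    · rw [← h, hzero]; exact hsign b (h ▸ hab)
    · rw [hpos a h, hpos b (lt_of_lt_of_le h hab)]
      exact core_ineq p hp hc h hab
  intro a b hab
  rcases le_total 0 a with h | h
  · exact hnn a b h hab
  · rcases le_total b 0 with h' | h'
    · have : H (-b) ≤ H (-a) := hnn (-b) (-a) (by linarith) (by linarith)
      rw [hodd, hodd] at this; linarith
    · calc H a = - H (-a) := by rw [hodd]; ring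
        _ ≤ 0 := by have := hsign (-a) (by linarith); linarith
        _ ≤ H b := hsign b h'

/-- `Q(t) = |f t|^p` is convex on `ℝ`, and consequently
`(|f t|^(p-2) f t f' t − |f s|^(p-2) f s f' s)(t − s) ≥ 0` for all `t, s`. -/
theorem stmt7 (p : ℝ) (hp : 2 ≤ p) (f : ℝ → ℝ)
    (hodd : ∀ t : ℝ, f (-t) = - f t)
    (hf0 : f 0 = 0)
    (hf' : ∀ t : ℝ, HasDerivAt f ((1 + 2 ^ (p - 1) * |f t| ^ p) ^ (-(1 / p))) t) :
    ConvexOn ℝ Set.univ (fun t : ℝ => |f t| ^ p) ∧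
      ∀ t s : ℝ,
        0 ≤ (|f t| ^ (p - 2) * f t * deriv f t - |f s| ^ (p - 2) * f s * deriv f s) *
          (t - s) := by
  have hc : (0:ℝ) < 2 ^ (p - 1) := Real.rpow_pos_of_pos two_pos _
  have hp0 : (0:ℝ) < p := by linarith
  have hderiv : ∀ t : ℝ, deriv f t = (1 + 2 ^ (p - 1) * |f t| ^ p) ^ (-(1 / p)) :=
    fun t => (hf' t).deriv
  -- f is monotone
  have hfmono : Monotone f := by
    apply StrictMono.monotone
    apply strictMono_of_deriv_pos
    intro x
    rw [hderiv x]
    have : (0:ℝ) < 1 + 2 ^ (p - 1) * |f x| ^ p := by positivity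
    exact Real.rpow_pos_of_pos this _
  -- the function M
  set M : ℝ → ℝ := fun t => |f t| ^ (p - 2) * f t * deriv f t with hM
  have hMmono : Monotone M := by
    have := H_mono p hp hc
    intro a b hab
    simp only [hM, hderiv]
    exact this (hfmono hab)
  -- derivative of Q
  have hQ : ∀ t : ℝ, HasDerivAt (fun t : ℝ => |f t| ^ p)
      (p * |f t| ^ (p - 2) * f t * ((1 + 2 ^ (p - 1) * |f t| ^ p) ^ (-(1 / p)))) t := by
    intro t
    exact (absRpow_hasDerivAt p hp (f t)).comp t (hf' t)
  have hQderiv : ∀ t : ℝ, deriv (fun t : ℝ => |f t| ^ p) t = p * M t := by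
    intro t
    rw [(hQ t).deriv, hM]
    simp only [hderiv]
    ring
  constructor
  · apply Monotone.convexOn_univ_of_deriv
    · exact fun t => (hQ t).differentiableAt
    · intro a b hab
      rw [hQderiv a, hQderiv b]
      exact mul_le_mul_of_nonneg_left (hMmono hab) hp0.le
  · intro t s
    rcases le_total s t with h | h
    · have := hMmono h
      have h1 : 0 ≤ M t - M s := by linarith
      exact mul_nonneg h1 (by linarith)
    · have := hMmono h
      have h1 : M t - M s ≤ 0 := by linarith
      have h2 : t - s ≤ 0 := by linarith
      show 0 ≤ (M t - M s) * (t - s)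
      nlinarith [mul_nonneg (neg_nonneg.2 h1) (neg_nonneg.2 h2)]
end

section
/- Let p ≥ 2 and f as in the change of variables. Then |f(t)|^p ≤ 2 |f(t)|^{p-2} f(t) f'(t) t for all t ≥ 0. -/
/-- `|f t|^p ≤ 2 |f t|^(p-2) f(t) f'(t) t` for all `t ≥ 0`. -/
theorem stmt8 (p : ℝ) (hp : 2 ≤ p) (f : ℝ → ℝ)
    (hodd : ∀ t : ℝ, f (-t) = - f t)
    (hf0 : f 0 = 0)
    (hf' : ∀ t : ℝ, HasDerivAt f ((1 + 2 ^ (p - 1) * |f t| ^ p) ^ (-(1 / p))) t) :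
    ∀ t : ℝ, 0 ≤ t → |f t| ^ p ≤ 2 * (|f t| ^ (p - 2) * f t * deriv f t) * t := by
  have hp0 : (0:ℝ) < p := by linarith
  set c : ℝ := (2:ℝ) ^ (p - 1) with hc
  have hcpos : 0 < c := Real.rpow_pos_of_pos (by norm_num) _
  have hB : ∀ s : ℝ, 0 < 1 + c * |f s| ^ p := by
    intro s
    have h1 : (0:ℝ) ≤ |f s| ^ p := Real.rpow_nonneg (abs_nonneg _) _
    nlinarith
  have hDpos : ∀ s : ℝ, 0 < (1 + c * |f s| ^ p) ^ (-(1 / p)) := fun s =>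
    Real.rpow_pos_of_pos (hB s) _
  have hfdiff : Differentiable ℝ f := fun s => (hf' s).differentiableAt
  have hfc : Continuous f := hfdiff.continuous
  -- f is strictly monotone, hence nonnegative on [0, ∞)
  have hmono : StrictMono f :=
    strictMono_of_hasDerivAt_pos hf' hDpos
  have hfnn : ∀ s : ℝ, 0 ≤ s → 0 ≤ f s := by
    intro s hs
    rcases eq_or_lt_of_le hs with h | h
    · simp [← h, hf0]
    · have := hmono h
      rw [hf0] at this
      exact this.le
  -- the auxiliary function G
  set G : ℝ → ℝ := fun s => f s * (1 + c * |f s| ^ p) ^ (1 / p) with hG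
  have hGcont : Continuous G := by
    apply hfc.mul
    apply Continuous.rpow_const
    · exact continuous_const.add (continuous_const.mul
        (hfc.abs.rpow_const (fun x => Or.inr hp0.le)))
    · exact fun x => Or.inl (hB x).ne'
  -- derivative of G at points where f > 0
  have hGd : ∀ s : ℝ, 0 < f s → ∃ V : ℝ, HasDerivAt G V s ∧ V ≤ 2 := by
    intro s hu
    set u := f s with hudef
    set D : ℝ := (1 + c * |f s| ^ p) ^ (-(1 / p)) with hD
    have hev : (fun x => |f x| ^ p) =ᶠ[nhds s] fun x => (f x) ^ p := by
      have h0 : ∀ᶠ x in nhds s, f x ∈ Set.Ioi (0:ℝ) :=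
        hfc.continuousAt.eventually_mem (Ioi_mem_nhds hu)
      exact h0.mono fun x hx => by simp only []; rw [abs_of_pos hx]
    have h1 : HasDerivAt (fun x => (f x) ^ p) (D * p * u ^ (p - 1)) s :=
      (hf' s).rpow_const (Or.inr (by linarith))
    have h1' : HasDerivAt (fun x => |f x| ^ p) (D * p * u ^ (p - 1)) s :=
      h1.congr_of_eventuallyEq hev
    have h2 : HasDerivAt (fun x => 1 + c * |f x| ^ p)
        (c * (D * p * u ^ (p - 1))) s := (h1'.const_mul c).const_add 1
    have h3 : HasDerivAt (fun x => (1 + c * |f x| ^ p) ^ (1 / p))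
        (c * (D * p * u ^ (p - 1)) * (1 / p) * (1 + c * |f s| ^ p) ^ (1 / p - 1)) s :=
      h2.rpow_const (Or.inl (hB s).ne')
    have h4 : HasDerivAt G
        (D * (1 + c * |f s| ^ p) ^ (1 / p)
          + u * (c * (D * p * u ^ (p - 1)) * (1 / p) * (1 + c * |f s| ^ p) ^ (1 / p - 1))) s :=
      (hf' s).mul h3
    refine ⟨_, h4, ?_⟩
    -- now bound the value
    set A : ℝ := 1 + c * |f s| ^ p with hA
    have hApos : 0 < A := hB s
    have e1 : D * A ^ (1 / p : ℝ) = 1 := by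
      rw [hD, ← Real.rpow_add hApos]
      norm_num
    have e2 : D * A ^ (1 / p - 1 : ℝ) = A⁻¹ := by
      rw [hD, ← Real.rpow_add hApos,
        show -(1/p) + (1/p - 1) = -1 by ring, Real.rpow_neg_one]
    have e3 : u * u ^ (p - 1) = u ^ p := by
      rw [Real.rpow_sub hu, Real.rpow_one, mul_div_cancel₀ _ hu.ne']
    have habs : |f s| = u := abs_of_pos hu
    have hup : (0:ℝ) ≤ u ^ p := Real.rpow_nonneg hu.le _
    have hAval : A = 1 + c * u ^ p := by rw [hA, habs]
    have hAinv : A⁻¹ ≤ 1 := by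
      rw [hAval]
      rw [inv_le_one_iff₀]
      right; nlinarith
    have hAinvpos : 0 < A⁻¹ := inv_pos.mpr hApos
    calc D * A ^ (1/p : ℝ) + u * (c * (D * p * u ^ (p - 1)) * (1 / p) * A ^ (1/p - 1 : ℝ))
        = D * A ^ (1/p : ℝ) + c * (u * u ^ (p-1)) * (p * (1/p)) * (D * A ^ (1/p - 1 : ℝ)) := by
          ring
      _ = 1 + c * u ^ p * A⁻¹ := by
          rw [e1, e2, e3, mul_one_div_cancel hp0.ne', mul_one]
      _ ≤ 1 + 1 := by
          have : c * u ^ p * A⁻¹ ≤ A * A⁻¹ := by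
            apply mul_le_mul_of_nonneg_right _ hAinvpos.le
            rw [hAval]; nlinarith
          rw [mul_inv_cancel₀ hApos.ne'] at this
          linarith
      _ = 2 := by norm_num
  -- G t ≤ 2 t on [0, ∞)
  have hGle : ∀ t : ℝ, 0 ≤ t → G t ≤ 2 * t := by
    have hH : MonotoneOn (fun s => 2 * s - G s) (Set.Ici (0:ℝ)) := by
      apply monotoneOn_of_deriv_nonneg (convex_Ici 0)
      · exact ((continuous_const.mul continuous_id).sub hGcont).continuousOn
      · intro x hx
        rw [interior_Ici] at hx
        have hux : 0 < f x := by
          have := hmono hx; rw [hf0] at this; exact this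
        obtain ⟨V, hV, _⟩ := hGd x hux
        exact (((hasDerivAt_id x).const_mul 2).sub hV).differentiableAt.differentiableWithinAt
      · intro x hx
        rw [interior_Ici] at hx
        have hux : 0 < f x := by
          have := hmono hx; rw [hf0] at this; exact this
        obtain ⟨V, hV, hV2⟩ := hGd x hux
        have : deriv (fun s => 2 * s - G s) x = 2 * 1 - V :=
          (((hasDerivAt_id x).const_mul 2).sub hV).deriv
        rw [this]; linarith
    intro t ht
    have hG0 : G 0 = 0 := by simp [hG, hf0]
    have h2 := hH (Set.self_mem_Ici (a := (0:ℝ))) ht ht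
    simp only [mul_zero, hG0, sub_zero] at h2
    linarith
  -- conclude
  intro t ht
  rcases eq_or_lt_of_le (hfnn t ht) with h0 | hu
  · rw [← h0]
    simp [Real.zero_rpow hp0.ne']
  · have hfd : deriv f t = (1 + c * |f t| ^ p) ^ (-(1 / p)) := (hf' t).deriv
    set u := f t with hudef
    set A : ℝ := 1 + c * |f t| ^ p with hA
    have hApos : 0 < A := hB t
    have e1 : A ^ (1/p : ℝ) * A ^ (-(1/p) : ℝ) = 1 := by
      rw [← Real.rpow_add hApos]; norm_num
    have hkey : u ≤ 2 * t * A ^ (-(1/p) : ℝ) := by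
      have h1 := hGle t ht
      have h2 : u * A ^ (1/p : ℝ) * A ^ (-(1/p) : ℝ) ≤ 2 * t * A ^ (-(1/p) : ℝ) :=
        mul_le_mul_of_nonneg_right h1 (Real.rpow_pos_of_pos hApos _).le
      rwa [mul_assoc, e1, mul_one] at h2
    have habs : |f t| = u := abs_of_pos hu
    rw [habs, hfd]
    have e4 : u ^ (p - 1) = u ^ (p - 2) * u := by
      rw [show p - 1 = (p - 2) + 1 by ring, Real.rpow_add hu, Real.rpow_one]
    have e5 : u ^ (p - 1) * u = u ^ p := by
      rw [Real.rpow_sub hu, Real.rpow_one, div_mul_cancel₀ _ hu.ne']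
    have hup1 : (0:ℝ) ≤ u ^ (p - 1) := Real.rpow_nonneg hu.le _
    have h3 : u ^ (p-1) * u ≤ u ^ (p-1) * (2 * t * A ^ (-(1/p) : ℝ)) :=
      mul_le_mul_of_nonneg_left hkey hup1
    rw [e5] at h3
    calc u ^ p ≤ u ^ (p-1) * (2 * t * A ^ (-(1/p) : ℝ)) := h3
      _ = 2 * (u ^ (p - 2) * u * A ^ (-(1/p) : ℝ)) * t := by rw [← e4]; ring
end

section
/- Let p ≥ 2 and f as in the change of variables, and let v ∈ Lᵖ(ℝᴺ). Then inf_{ξ>0} (1/ξ)[1 + ∫_{ℝᴺ} |f(ξ v(x))|^p dx] ≤ C (∫_{ℝᴺ} |v|^p)^{1/p} for a constant C > 0 depending only on p. Hence the quantity ‖v‖ = |∇v|_p + inf_{ξ>0} (1/ξ)[1 + ∫ |f(ξ v)|^p] satisfies ‖v‖ ≤ c₁ ‖v‖_{W^{1,p}} for all v ∈ W^{1,p}(ℝᴺ). -/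
open MeasureTheory Set

/-! Since `0 ≤ f' ≤ 1` and `f 0 = 0`, we have `|f t| ≤ |t|`, so for every `ξ > 0`
`(1/ξ) (1 + ∫ |f (ξ v)|^p) ≤ 1/ξ + ξ^(p-1) ∫ |v|^p`. The choice `ξ = (∫ |v|^p)^(-1/p)` (or `ξ → ∞`
when `v = 0` a.e.) makes this `2 |v|_p`, and then `|∇v|_p + 2 |v|_p ≤ 3 ‖v‖_{W^{1,p}}`. -/

lemma abs_le_abs_of_hasDerivAt_of_abs_le_one {f f' : ℝ → ℝ} (hf0 : f 0 = 0)
    (hf : ∀ t, HasDerivAt f (f' t) t) (hf'_le : ∀ t, |f' t| ≤ 1) (t : ℝ) : |f t| ≤ |t| := by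
  simpa [hf0] using convex_univ.norm_image_sub_le_of_norm_hasDerivWithin_le
    (fun x _ => (hf x).hasDerivWithinAt) (fun x _ => hf'_le x) (mem_univ 0) (mem_univ t)

lemma one_add_mul_rpow_rpow_neg_inv_le_one {p a : ℝ} (hp : 0 < p) (ha : 0 ≤ a) (s : ℝ) :
    |(1 + a * |s| ^ p) ^ (-(1 / p))| ≤ 1 := by
  have hbase : 1 ≤ 1 + a * |s| ^ p := le_add_of_nonneg_right (by positivity)
  rw [abs_of_nonneg (Real.rpow_nonneg (by linarith) _)]
  exact Real.rpow_le_one_of_one_le_of_nonpos hbase (by simp [hp.le])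

lemma csInf_image_Ioi_le_two_mul_rpow {h : ℝ → ℝ} {p A : ℝ} (hp : 0 < p) (hA : 0 ≤ A)
    (h_nonneg : ∀ ξ > 0, 0 ≤ h ξ) (h_le : ∀ ξ > 0, h ξ ≤ 1 / ξ * (1 + ξ ^ p * A)) :
    sInf (h '' Ioi 0) ≤ 2 * A ^ (1 / p) := by
  have hbdd : BddBelow (h '' Ioi 0) := ⟨0, by rintro _ ⟨ξ, hξ, rfl⟩; exact h_nonneg ξ hξ⟩
  have hinf_le : ∀ ξ > 0, sInf (h '' Ioi 0) ≤ 1 / ξ * (1 + ξ ^ p * A) := fun ξ hξ =>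
    (csInf_le hbdd (mem_image_of_mem h hξ)).trans (h_le ξ hξ)
  rcases hA.eq_or_lt with rfl | hA_pos
  · rw [Real.zero_rpow (by positivity), mul_zero]
    refine le_of_forall_pos_le_add fun ε hε => ?_
    simpa using hinf_le ε⁻¹ (inv_pos.2 hε)
  · set ξ := A ^ (-(1 / p)) with hξ_def
    have hξ_pow : ξ ^ p * A = 1 := by
      rw [← Real.rpow_mul hA, neg_mul, one_div_mul_cancel hp.ne', Real.rpow_neg_one,
        inv_mul_cancel₀ hA_pos.ne']
    have hξ_inv : 1 / ξ = A ^ (1 / p) := by rw [hξ_def, Real.rpow_neg hA, one_div, inv_inv]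
    calc sInf (h '' Ioi 0) ≤ 1 / ξ * (1 + ξ ^ p * A) := hinf_le ξ (Real.rpow_pos_of_pos hA_pos _)
      _ = 2 * A ^ (1 / p) := by rw [hξ_pow, hξ_inv]; ring

section Measure

variable {α : Type*} [MeasurableSpace α] {μ : Measure α} {g : ℝ → ℝ} {p : ℝ} {v : α → ℝ}

lemma integral_abs_comp_mul_rpow_le (hg : ∀ t, |g t| ≤ |t|) (hp : 0 < p)
    (hv : MemLp v (ENNReal.ofReal p) μ) {ξ : ℝ} (hξ : 0 < ξ) :
    ∫ x, |g (ξ * v x)| ^ p ∂μ ≤ ξ ^ p * ∫ x, |v x| ^ p ∂μ := by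
  have hv_int : Integrable (fun x => |v x| ^ p) μ := by
    simpa [Real.norm_eq_abs, ENNReal.toReal_ofReal hp.le] using
      hv.integrable_norm_rpow (by simp [hp]) (by simp)
  rw [← integral_const_mul]
  refine integral_mono_of_nonneg (.of_forall fun x => by positivity) (hv_int.const_mul _)
    (.of_forall fun x => ?_)
  calc |g (ξ * v x)| ^ p ≤ |ξ * v x| ^ p := Real.rpow_le_rpow (abs_nonneg _) (hg _) hp.le
    _ = ξ ^ p * |v x| ^ p := by rw [abs_mul, abs_of_pos hξ, Real.mul_rpow hξ.le (abs_nonneg _)]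

theorem csInf_inv_mul_one_add_integral_le (hg : ∀ t, |g t| ≤ |t|) (hp : 0 < p)
    (hv : MemLp v (ENNReal.ofReal p) μ) :
    sInf ((fun ξ : ℝ => (1 / ξ) * (1 + ∫ x, |g (ξ * v x)| ^ p ∂μ)) '' Ioi 0) ≤
      2 * (∫ x, |v x| ^ p ∂μ) ^ (1 / p) := by
  refine csInf_image_Ioi_le_two_mul_rpow hp (integral_nonneg fun x => by positivity)
    (fun ξ hξ => ?_) (fun ξ hξ => ?_)
  · have : 0 ≤ ∫ x, |g (ξ * v x)| ^ p ∂μ := integral_nonneg fun x => by positivity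
    positivity
  · gcongr
    exact integral_abs_comp_mul_rpow_le hg hp hv hξ

end Measure

theorem stmt11_general (N : ℕ) (p : ℝ) (hp : 2 ≤ p) (f : ℝ → ℝ)
    (hf0 : f 0 = 0)
    (hf' : ∀ t : ℝ, HasDerivAt f ((1 + 2 ^ (p - 1) * |f t| ^ p) ^ (-(1 / p))) t) :
    ∃ C : ℝ, 0 < C ∧
      (∀ v : EuclideanSpace ℝ (Fin N) → ℝ, MemLp v (ENNReal.ofReal p) volume →
        sInf ((fun ξ : ℝ =>
            (1 / ξ) * (1 + ∫ x, |f (ξ * v x)| ^ p)) '' Set.Ioi 0) ≤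
          C * (∫ x, |v x| ^ p) ^ (1 / p)) ∧
      ∃ c₁ : ℝ, 0 < c₁ ∧
        ∀ v : EuclideanSpace ℝ (Fin N) → ℝ,
          MemLp v (ENNReal.ofReal p) volume →
          Differentiable ℝ v →
          MemLp (fun x => fderiv ℝ v x) (ENNReal.ofReal p) volume →
          (∫ x, ‖fderiv ℝ v x‖ ^ p) ^ (1 / p) +
              sInf ((fun ξ : ℝ =>
                (1 / ξ) * (1 + ∫ x, |f (ξ * v x)| ^ p)) '' Set.Ioi 0) ≤
            c₁ * ((∫ x, ‖fderiv ℝ v x‖ ^ p) + ∫ x, |v x| ^ p) ^ (1 / p) := by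
  have hp0 : 0 < p := by linarith
  have hf_le : ∀ t, |f t| ≤ |t| := abs_le_abs_of_hasDerivAt_of_abs_le_one hf0 hf'
    fun t => one_add_mul_rpow_rpow_neg_inv_le_one hp0 (by positivity) (f t)
  have key (v : EuclideanSpace ℝ (Fin N) → ℝ) (hv : MemLp v (ENNReal.ofReal p) volume) :=
    csInf_inv_mul_one_add_integral_le hf_le hp0 hv
  refine ⟨2, two_pos, key, 3, three_pos, fun v hv _ _ => ?_⟩
  have hD : 0 ≤ ∫ x, ‖fderiv ℝ v x‖ ^ p := integral_nonneg fun x => by positivity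
  have hA : 0 ≤ ∫ x, |v x| ^ p := integral_nonneg fun x => by positivity
  have hD_le := Real.rpow_le_rpow hD (le_add_of_nonneg_right hA) (one_div_nonneg.2 hp0.le)
  have hA_le := Real.rpow_le_rpow hA (le_add_of_nonneg_left hD) (one_div_nonneg.2 hp0.le)
  linarith [key v hv]

/-- for `v ∈ Lᵖ(ℝᴺ)`,
`inf_{ξ>0} (1/ξ)[1 + ∫ |f(ξ v)|^p] ≤ C (∫ |v|^p)^(1/p)` with `C` depending only on `p`;
hence `‖v‖ = |∇v|_p + inf_{ξ>0}(1/ξ)[1 + ∫ |f(ξ v)|^p] ≤ c₁ ‖v‖_{W^{1,p}}`. -/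
theorem stmt11 (N : ℕ) (p : ℝ) (hp : 2 ≤ p) (hN : p < N) (f : ℝ → ℝ)
    (hodd : ∀ t : ℝ, f (-t) = - f t)
    (hf0 : f 0 = 0)
    (hf' : ∀ t : ℝ, HasDerivAt f ((1 + 2 ^ (p - 1) * |f t| ^ p) ^ (-(1 / p))) t) :
    ∃ C : ℝ, 0 < C ∧
      (∀ v : EuclideanSpace ℝ (Fin N) → ℝ, MemLp v (ENNReal.ofReal p) volume →
        sInf ((fun ξ : ℝ =>
            (1 / ξ) * (1 + ∫ x, |f (ξ * v x)| ^ p)) '' Set.Ioi 0) ≤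
          C * (∫ x, |v x| ^ p) ^ (1 / p)) ∧
      ∃ c₁ : ℝ, 0 < c₁ ∧
        ∀ v : EuclideanSpace ℝ (Fin N) → ℝ,
          MemLp v (ENNReal.ofReal p) volume →
          Differentiable ℝ v →
          MemLp (fun x => fderiv ℝ v x) (ENNReal.ofReal p) volume →
          (∫ x, ‖fderiv ℝ v x‖ ^ p) ^ (1 / p) +
              sInf ((fun ξ : ℝ =>
                (1 / ξ) * (1 + ∫ x, |f (ξ * v x)| ^ p)) '' Set.Ioi 0) ≤
            c₁ * ((∫ x, ‖fderiv ℝ v x‖ ^ p) + ∫ x, |v x| ^ p) ^ (1 / p) :=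
  stmt11_general N p hp f hf0 hf'
end

section
/- Let p ≥ 2, f as in the change of variables, and (v_n) a sequence of measurable functions on ℝᴺ with ∫_{ℝᴺ} |f(v_n)|^p → 0. Then inf_{ξ>0} (1/ξ){1 + ∫_{ℝᴺ} |f(ξ v_n)|^p} → 0 as n → ∞. -/
open MeasureTheory Filter Set Topology

/-! `f` is concave on `[0, ∞)` because `f' = (1 + 2^{p-1} |f|^p)^{-1/p}` decreases as `|f|` grows,
and `f (0) = 0`; hence `|f (ξ t)| ≤ ξ |f t|` for `ξ ≥ 1`, so `∫ |f (ξ vₙ)|^p ≤ ξ^p ∫ |f (vₙ)|^p → 0`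
and the infimum is eventually below `(1 + o(1)) / ξ` for every fixed `ξ ≥ 1`. -/

theorem ConcaveOn.map_mul_le_mul {f : ℝ → ℝ} (hf : ConcaveOn ℝ (Ici 0) f) (hf0 : 0 ≤ f 0)
    {ξ t : ℝ} (hξ : 1 ≤ ξ) (ht : 0 ≤ t) : f (ξ * t) ≤ ξ * f t := by
  have hξ0 : 0 < ξ := one_pos.trans_le hξ
  have hξ_inv : ξ⁻¹ ≤ 1 := inv_le_one_of_one_le₀ hξ
  have hconc := hf.2 (mem_Ici.2 le_rfl) (mem_Ici.2 (mul_nonneg hξ0.le ht))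
    (sub_nonneg.2 hξ_inv) (inv_nonneg.2 hξ0.le) (sub_add_cancel 1 ξ⁻¹)
  have ht_eq : (1 - ξ⁻¹) • (0 : ℝ) + ξ⁻¹ • (ξ * t) = t := by
    simp [smul_eq_mul, inv_mul_cancel_left₀ hξ0.ne']
  rw [ht_eq, smul_eq_mul, smul_eq_mul] at hconc
  have : ξ⁻¹ * f (ξ * t) ≤ f t := by nlinarith [sub_nonneg.2 hξ_inv]
  rwa [inv_mul_le_iff₀ hξ0] at this

section OddMonotone

variable {f : ℝ → ℝ}

theorem abs_apply_eq_apply_abs_of_odd (hodd : ∀ t, f (-t) = -f t) (hmono : Monotone f) (t : ℝ) :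
    |f t| = f |t| := by
  have hf0 : f 0 = 0 := by linarith [neg_zero (G := ℝ) ▸ hodd 0]
  rcases le_total 0 t with ht | ht
  · rw [abs_of_nonneg ht, abs_of_nonneg (hf0 ▸ hmono ht)]
  · rw [abs_of_nonpos ht, abs_of_nonpos (hf0 ▸ hmono ht), hodd]

theorem abs_apply_le_abs_apply_mul_of_odd (hodd : ∀ t, f (-t) = -f t) (hmono : Monotone f)
    {ξ : ℝ} (hξ : 1 ≤ ξ) (t : ℝ) : |f t| ≤ |f (ξ * t)| := by
  rw [abs_apply_eq_apply_abs_of_odd hodd hmono, abs_apply_eq_apply_abs_of_odd hodd hmono, abs_mul,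
    abs_of_nonneg (zero_le_one.trans hξ)]
  exact hmono (le_mul_of_one_le_left (abs_nonneg t) hξ)

theorem abs_apply_mul_le_mul_abs_of_odd (hodd : ∀ t, f (-t) = -f t) (hmono : Monotone f)
    (hconc : ConcaveOn ℝ (Ici 0) f) {ξ : ℝ} (hξ : 1 ≤ ξ) (t : ℝ) : |f (ξ * t)| ≤ ξ * |f t| := by
  rw [abs_apply_eq_apply_abs_of_odd hodd hmono, abs_apply_eq_apply_abs_of_odd hodd hmono, abs_mul,
    abs_of_nonneg (zero_le_one.trans hξ)]
  have hf0 := abs_apply_eq_apply_abs_of_odd hodd hmono 0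
  rw [abs_zero] at hf0
  exact hconc.map_mul_le_mul (hf0 ▸ abs_nonneg _) hξ (abs_nonneg t)

end OddMonotone

section ChangeOfVariables

variable {p : ℝ} {f : ℝ → ℝ}

theorem strictMono_of_hasDerivAt_one_add_rpow
    (hf' : ∀ t, HasDerivAt f ((1 + 2 ^ (p - 1) * |f t| ^ p) ^ (-(1 / p))) t) : StrictMono f :=
  strictMono_of_hasDerivAt_pos hf' fun t => by positivity

theorem concaveOn_Ici_of_hasDerivAt_one_add_rpow (hp : 0 < p) (hf0 : f 0 = 0)
    (hf' : ∀ t, HasDerivAt f ((1 + 2 ^ (p - 1) * |f t| ^ p) ^ (-(1 / p))) t) :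
    ConcaveOn ℝ (Ici 0) f := by
  have hmono := (strictMono_of_hasDerivAt_one_add_rpow hf').monotone
  have hdiff : Differentiable ℝ f := fun t => (hf' t).differentiableAt
  refine AntitoneOn.concaveOn_of_deriv (convex_Ici 0) hdiff.continuous.continuousOn
    hdiff.differentiableOn fun s hs t ht hst => ?_
  rw [interior_Ici, mem_Ioi] at hs ht
  have hfs : 0 ≤ f s := hf0 ▸ hmono hs.le
  have hfst : |f s| ^ p ≤ |f t| ^ p := by
    rw [abs_of_nonneg hfs, abs_of_nonneg (hfs.trans (hmono hst))]
    exact Real.rpow_le_rpow hfs (hmono hst) hp.le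
  rw [(hf' s).deriv, (hf' t).deriv]
  exact Real.rpow_le_rpow_of_nonpos (by positivity) (by gcongr)
    (neg_nonpos.2 (one_div_nonneg.2 hp.le))

end ChangeOfVariables

theorem integral_le_mul_integral_of_le_of_le_mul {α : Type*} [MeasurableSpace α] {μ : Measure α}
    {g h : α → ℝ} {c : ℝ} (hg : AEStronglyMeasurable g μ) (hh : AEStronglyMeasurable h μ)
    (hg0 : ∀ x, 0 ≤ g x) (hgh : ∀ x, g x ≤ h x) (hhg : ∀ x, h x ≤ c * g x) :
    ∫ x, h x ∂μ ≤ c * ∫ x, g x ∂μ := by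
  by_cases hgi : Integrable g μ
  · have hhi : Integrable h μ := (hgi.const_mul c).mono' hh (.of_forall fun x => by
      rw [Real.norm_eq_abs, abs_of_nonneg ((hg0 x).trans (hgh x))]; exact hhg x)
    rw [← integral_const_mul]
    exact integral_mono hhi (hgi.const_mul c) hhg
  · have hhi : ¬ Integrable h μ := fun hhi => hgi (hhi.mono' hg (.of_forall fun x => by
      rw [Real.norm_eq_abs, abs_of_nonneg (hg0 x)]; exact hgh x))
    rw [integral_undef hhi, integral_undef hgi, mul_zero]

theorem tendsto_sInf_one_div_mul_one_add {ι : Type*} {l : Filter ι} {p : ℝ} (I : ι → ℝ → ℝ)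
    (hI0 : ∀ i ξ, 0 ≤ I i ξ) (hI_le : ∀ i ξ, 1 ≤ ξ → I i ξ ≤ ξ ^ p * I i 1)
    (hI : Tendsto (fun i => I i 1) l (𝓝 0)) :
    Tendsto (fun i => sInf ((fun ξ : ℝ => (1 / ξ) * (1 + I i ξ)) '' Ioi 0)) l (𝓝 0) := by
  have hval0 : ∀ i, ∀ ξ > (0 : ℝ), 0 ≤ (1 / ξ) * (1 + I i ξ) := fun i ξ hξ => by
    have := hI0 i ξ; positivity
  have hsInf_le : ∀ i, ∀ ξ > (0 : ℝ), sInf ((fun ξ : ℝ => (1 / ξ) * (1 + I i ξ)) '' Ioi 0)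
      ≤ (1 / ξ) * (1 + I i ξ) := fun i ξ hξ =>
    csInf_le ⟨0, by rintro _ ⟨ζ, hζ, rfl⟩; exact hval0 i ζ hζ⟩ ⟨ξ, hξ, rfl⟩
  refine tendsto_order.2 ⟨fun a ha => .of_forall fun i => ha.trans_le <|
    Real.sInf_nonneg (by rintro _ ⟨ζ, hζ, rfl⟩; exact hval0 i ζ hζ), fun ε hε => ?_⟩
  obtain ⟨k, hk⟩ := exists_nat_one_div_lt hε
  set ξ : ℝ := k + 1
  have hξ : 1 ≤ ξ := le_add_of_nonneg_left k.cast_nonneg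
  have hlim : Tendsto (fun i => (1 / ξ) * (1 + ξ ^ p * I i 1)) l (𝓝 (1 / ξ)) := by
    simpa using ((hI.const_mul (ξ ^ p)).const_add 1).const_mul (1 / ξ)
  filter_upwards [(tendsto_order.1 hlim).2 ε hk] with i hi
  calc _ ≤ (1 / ξ) * (1 + I i ξ) := hsInf_le i ξ (one_pos.trans_le hξ)
    _ ≤ (1 / ξ) * (1 + ξ ^ p * I i 1) := by gcongr; exact hI_le i ξ hξ
    _ < ε := hi

/-- if `∫ |f(v_n)|^p → 0` then
`inf_{ξ>0} (1/ξ){1 + ∫ |f(ξ v_n)|^p} → 0`. -/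
theorem stmt12 (N : ℕ) (p : ℝ) (hp : 2 ≤ p) (f : ℝ → ℝ)
    (hodd : ∀ t : ℝ, f (-t) = - f t)
    (hf0 : f 0 = 0)
    (hf' : ∀ t : ℝ, HasDerivAt f ((1 + 2 ^ (p - 1) * |f t| ^ p) ^ (-(1 / p))) t)
    (v : ℕ → EuclideanSpace ℝ (Fin N) → ℝ)
    (hmeas : ∀ n, Measurable (v n))
    (hto : Filter.Tendsto (fun n => ∫ x, |f (v n x)| ^ p) Filter.atTop (nhds 0)) :
    Filter.Tendsto
      (fun n => sInf ((fun ξ : ℝ =>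
        (1 / ξ) * (1 + ∫ x, |f (ξ * v n x)| ^ p)) '' Set.Ioi 0))
      Filter.atTop (nhds 0) := by
  have hp0 : 0 < p := by linarith
  have hmono := (strictMono_of_hasDerivAt_one_add_rpow hf').monotone
  have hconc := concaveOn_Ici_of_hasDerivAt_one_add_rpow hp0 hf0 hf'
  have hfc : Continuous f := continuous_iff_continuousAt.2 fun t => (hf' t).continuousAt
  have hmeas_int : ∀ (ξ : ℝ) n, AEStronglyMeasurable (fun x => |f (ξ * v n x)| ^ p) volume :=
    fun ξ n => ((hfc.measurable.comp ((hmeas n).const_mul ξ)).abs.pow_const p).aestronglyMeasurable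
  refine tendsto_sInf_one_div_mul_one_add (p := p) _
    (fun n ξ => integral_nonneg fun x => by positivity) (fun n ξ hξ => ?_) (by simpa using hto)
  refine integral_le_mul_integral_of_le_of_le_mul (hmeas_int 1 n) (hmeas_int ξ n)
    (fun x => by positivity) (fun x => ?_) (fun x => ?_)
  · rw [one_mul]
    exact Real.rpow_le_rpow (abs_nonneg _)
      (abs_apply_le_abs_apply_mul_of_odd hodd hmono hξ _) hp0.le
  · rw [one_mul, ← Real.mul_rpow (zero_le_one.trans hξ) (abs_nonneg _)]
    exact Real.rpow_le_rpow (abs_nonneg _)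
      (abs_apply_mul_le_mul_abs_of_odd hodd hmono hconc hξ _) hp0.le
end

section
/- Let p ≥ 2 and f the change-of-variables function. If (v_n) ⊂ Lᵖ(ℝᴺ) is a sequence of nonnegative functions with v_n → v a.e., ∫|f(v_n)|^p → ∫|f(v)|^p < ∞, and v ∈ Lᵖ(ℝᴺ), then ∫_{ℝᴺ} |f(v_n − v)|^p → 0. -/
/-!
Since `0 < f' ≤ 1`, `f` is `1`-Lipschitz, so `|f (v_n - v)| ≤ |f v_n| + |v|` and
`|f (v_n - v)| ^ p ≤ 2 ^ (p - 1) (|f v_n| ^ p + |v| ^ p)`. The dominating functions converge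
a.e. and in integral, so the generalized dominated convergence theorem applies.
-/

open MeasureTheory Filter Topology

section GeneralizedDominatedConvergence

variable {α : Type*} [MeasurableSpace α] {μ : Measure α}

/-- **Scheffé's lemma**. -/
theorem tendsto_integral_abs_sub_of_tendsto_integral {g : ℕ → α → ℝ} {G : α → ℝ}
    (hg_nonneg : ∀ n, 0 ≤ᵐ[μ] g n) (hg : ∀ n, Integrable (g n) μ) (hG : Integrable G μ)
    (h_lim : ∀ᵐ x ∂μ, Tendsto (fun n => g n x) atTop (𝓝 (G x)))
    (h_int : Tendsto (fun n => ∫ x, g n x ∂μ) atTop (𝓝 (∫ x, G x ∂μ))) :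
    Tendsto (fun n => ∫ x, |g n x - G x| ∂μ) atTop (𝓝 0) := by
  have h_pos_part : Tendsto (fun n => ∫ x, max (G x - g n x) 0 ∂μ) atTop (𝓝 0) := by
    have h := tendsto_integral_of_dominated_convergence (μ := μ) (fun x => |G x|)
      (fun n => (hG.sub (hg n)).pos_part.aestronglyMeasurable) hG.abs
      (fun n => by
        filter_upwards [hg_nonneg n] with x (hx : 0 ≤ g n x)
        change ‖max (G x - g n x) 0‖ ≤ |G x|
        rw [Real.norm_eq_abs, abs_of_nonneg (le_max_right _ _)]
        exact max_le (by linarith [le_abs_self (G x)]) (abs_nonneg _))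
      (by
        filter_upwards [h_lim] with x hx
        simpa using ((tendsto_const_nhds (x := G x)).sub hx).max tendsto_const_nhds)
    simpa using h
  have h_eq : ∀ n, ∫ x, |g n x - G x| ∂μ
      = (∫ x, g n x ∂μ - ∫ x, G x ∂μ) + 2 * ∫ x, max (G x - g n x) 0 ∂μ := by
    intro n
    have h_sub : Integrable (fun x => g n x - G x) μ := (hg n).sub hG
    have h_pos : Integrable (fun x => 2 * max (G x - g n x) 0) μ :=
      (hG.sub (hg n)).pos_part.const_mul 2
    rw [← integral_sub (hg n) hG, ← integral_const_mul, ← integral_add h_sub h_pos]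
    refine integral_congr_ae (Eventually.of_forall fun x => ?_)
    rcases le_total (g n x) (G x) with h | h
    · simp only [abs_of_nonpos (sub_nonpos.2 h), max_eq_left (sub_nonneg.2 h)]; ring
    · simp only [abs_of_nonneg (sub_nonneg.2 h), max_eq_right (sub_nonpos.2 h)]; ring
  simp_rw [h_eq]
  simpa using (tendsto_sub_nhds_zero_iff.2 h_int).add (h_pos_part.const_mul 2)

/-- **Generalized dominated convergence theorem**. -/
theorem tendsto_integral_of_le_of_tendsto_integral {F g : ℕ → α → ℝ} {G : α → ℝ}
    (hF_meas : ∀ n, AEStronglyMeasurable (F n) μ) (hF_nonneg : ∀ n, 0 ≤ᵐ[μ] F n)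
    (hFg : ∀ n, F n ≤ᵐ[μ] g n) (hg : ∀ n, Integrable (g n) μ) (hG : Integrable G μ)
    (hF_lim : ∀ᵐ x ∂μ, Tendsto (fun n => F n x) atTop (𝓝 0))
    (hg_lim : ∀ᵐ x ∂μ, Tendsto (fun n => g n x) atTop (𝓝 (G x)))
    (hg_int : Tendsto (fun n => ∫ x, g n x ∂μ) atTop (𝓝 (∫ x, G x ∂μ))) :
    Tendsto (fun n => ∫ x, F n x ∂μ) atTop (𝓝 0) := by
  have hF_int : ∀ n, Integrable (F n) μ := fun n =>
    (hg n).mono' (hF_meas n) (by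
      filter_upwards [hF_nonneg n, hFg n] with x h0 h1
      rwa [Real.norm_eq_abs, abs_of_nonneg h0])
  -- `F n ≤ min (F n) |G| + |g n - G|`, and both terms on the right have vanishing integrals.
  have h_min_int : ∀ n, Integrable (fun x => min (F n x) |G x|) μ := fun n =>
    (hF_int n).inf hG.abs
  have h_min : Tendsto (fun n => ∫ x, min (F n x) |G x| ∂μ) atTop (𝓝 0) := by
    have h := tendsto_integral_of_dominated_convergence (μ := μ) (fun x => |G x|)
      (fun n => (h_min_int n).aestronglyMeasurable) hG.abs
      (fun n => by
        filter_upwards [hF_nonneg n] with x hx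
        rw [Real.norm_eq_abs, abs_of_nonneg (le_min hx (abs_nonneg _))]
        exact min_le_right _ _)
      (by
        filter_upwards [hF_lim] with x hx
        simpa using hx.min (tendsto_const_nhds (x := |G x|)))
    simpa using h
  have h_scheffe := tendsto_integral_abs_sub_of_tendsto_integral
    (fun n => (hF_nonneg n).trans (hFg n)) hg hG hg_lim hg_int
  refine tendsto_of_tendsto_of_tendsto_of_le_of_le tendsto_const_nhds
    (by simpa using h_min.add h_scheffe) (fun n => integral_nonneg_of_ae (hF_nonneg n))
    (fun n => ?_)
  have h_abs : Integrable (fun x => |g n x - G x|) μ := ((hg n).sub hG).abs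
  rw [← integral_add (h_min_int n) h_abs]
  refine integral_mono_ae (hF_int n) ((h_min_int n).add h_abs) ?_
  filter_upwards [hFg n] with x hx
  rcases min_cases (F n x) |G x| with ⟨h, -⟩ | ⟨h, -⟩ <;> rw [h]
  · linarith [abs_nonneg (g n x - G x)]
  · linarith [le_abs_self (g n x - G x), le_abs_self (G x)]

end GeneralizedDominatedConvergence

lemma lipschitzWith_one_of_hasDerivAt {f f' : ℝ → ℝ} (hf : ∀ t, HasDerivAt f (f' t) t)
    (hf' : ∀ t, |f' t| ≤ 1) : LipschitzWith 1 f :=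
  lipschitzWith_of_nnnorm_deriv_le (fun t => (hf t).differentiableAt) fun t => by
    rw [(hf t).deriv, ← NNReal.coe_le_coe, coe_nnnorm, Real.norm_eq_abs]
    exact hf' t

lemma abs_one_add_rpow_neg_le_one {a q : ℝ} (ha : 0 ≤ a) (hq : 0 ≤ q) :
    |(1 + a) ^ (-q)| ≤ 1 := by
  rw [abs_of_nonneg (Real.rpow_nonneg (by linarith) _)]
  exact Real.rpow_le_one_of_one_le_of_nonpos (by linarith) (neg_nonpos.2 hq)

lemma Real.add_rpow_le_two_rpow_mul {a b p : ℝ} (ha : 0 ≤ a) (hb : 0 ≤ b) (hp : 1 ≤ p) :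
    (a + b) ^ p ≤ 2 ^ (p - 1) * (a ^ p + b ^ p) := by
  lift a to NNReal using ha
  lift b to NNReal using hb
  exact_mod_cast NNReal.rpow_add_le_mul_rpow_add_rpow a b hp

namespace LipschitzWith

variable {f : ℝ → ℝ}

lemma abs_apply_le_abs (hf : LipschitzWith 1 f) (hf0 : f 0 = 0) (t : ℝ) : |f t| ≤ |t| := by
  simpa [hf0, Real.dist_eq] using hf.dist_le_mul t 0

lemma abs_apply_sub_le (hf : LipschitzWith 1 f) (a b : ℝ) : |f (a - b)| ≤ |f a| + |b| := by
  have h := hf.dist_le_mul (a - b) a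
  simp only [NNReal.coe_one, one_mul, Real.dist_eq, sub_sub_cancel_left, abs_neg] at h
  linarith [abs_sub_abs_le_abs_sub (f (a - b)) (f a)]

lemma abs_apply_sub_rpow_le (hf : LipschitzWith 1 f) {p : ℝ} (hp : 1 ≤ p) (a b : ℝ) :
    |f (a - b)| ^ p ≤ 2 ^ (p - 1) * (|f a| ^ p + |b| ^ p) :=
  (Real.rpow_le_rpow (abs_nonneg _) (hf.abs_apply_sub_le a b) (by linarith)).trans
    (Real.add_rpow_le_two_rpow_mul (abs_nonneg _) (abs_nonneg _) hp)

lemma integrable_abs_comp_rpow {α : Type*} [MeasurableSpace α] {μ : Measure α} {w : α → ℝ}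
    {p : ℝ} (hf : LipschitzWith 1 f) (hf0 : f 0 = 0) (hp : 0 ≤ p) (hw : AEMeasurable w μ)
    (hw_int : Integrable (fun x => |w x| ^ p) μ) : Integrable (fun x => |f (w x)| ^ p) μ :=
  hw_int.mono'
    ((hf.continuous.measurable.comp_aemeasurable hw).abs.pow_const p).aestronglyMeasurable
    (Eventually.of_forall fun x => by
      rw [Real.norm_eq_abs, abs_of_nonneg (by positivity)]
      exact Real.rpow_le_rpow (abs_nonneg _) (hf.abs_apply_le_abs hf0 _) hp)

end LipschitzWith

theorem stmt17_general (N : ℕ) (p : ℝ) (hp : 2 ≤ p) (f : ℝ → ℝ)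
    (hf0 : f 0 = 0)
    (hf' : ∀ t : ℝ, HasDerivAt f ((1 + 2 ^ (p - 1) * |f t| ^ p) ^ (-(1 / p))) t)
    (v : ℕ → EuclideanSpace ℝ (Fin N) → ℝ) (w : EuclideanSpace ℝ (Fin N) → ℝ)
    (hmeas : ∀ n, Measurable (v n))
    (hae : ∀ᵐ x : EuclideanSpace ℝ (Fin N) ∂volume,
      Filter.Tendsto (fun n => v n x) Filter.atTop (nhds (w x)))
    (hwLp : MemLp w (ENNReal.ofReal p) volume)
    (hintn : ∀ n, Integrable (fun x => |f (v n x)| ^ p))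
    (hto : Filter.Tendsto (fun n => ∫ x, |f (v n x)| ^ p) Filter.atTop
      (nhds (∫ x, |f (w x)| ^ p))) :
    Filter.Tendsto (fun n => ∫ x, |f (v n x - w x)| ^ p) Filter.atTop (nhds 0) := by
  have hp0 : 0 < p := by linarith
  have hlip : LipschitzWith 1 f := lipschitzWith_one_of_hasDerivAt hf' fun t =>
    abs_one_add_rpow_neg_le_one (by positivity) (by positivity)
  have hw_int : Integrable (fun x => |w x| ^ p) := by
    simpa [ENNReal.toReal_ofReal hp0.le, Real.norm_eq_abs] using
      hwLp.integrable_norm_rpow (by simp; linarith) ENNReal.ofReal_ne_top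
  have hfw_int : Integrable (fun x => |f (w x)| ^ p) :=
    hlip.integrable_abs_comp_rpow hf0 hp0.le hwLp.1.aemeasurable hw_int
  refine tendsto_integral_of_le_of_tendsto_integral
    (g := fun n x => 2 ^ (p - 1) * (|f (v n x)| ^ p + |w x| ^ p))
    (G := fun x => 2 ^ (p - 1) * (|f (w x)| ^ p + |w x| ^ p))
    (fun n => ((hlip.continuous.measurable.comp_aemeasurable
      ((hmeas n).aemeasurable.sub hwLp.1.aemeasurable)).abs.pow_const p).aestronglyMeasurable)
    (fun n => Eventually.of_forall fun x => by positivity)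
    (fun n => Eventually.of_forall fun x => hlip.abs_apply_sub_rpow_le (by linarith) _ _)
    (fun n => ((hintn n).add hw_int).const_mul _) ((hfw_int.add hw_int).const_mul _) ?_ ?_ ?_
  · filter_upwards [hae] with x hx
    simpa [hf0, Real.zero_rpow hp0.ne'] using
      ((hlip.continuous.tendsto 0).comp (tendsto_sub_nhds_zero_iff.2 hx)).abs.rpow_const
        (Or.inr hp0.le)
  · filter_upwards [hae] with x hx
    exact ((((hlip.continuous.tendsto _).comp hx).abs.rpow_const (Or.inr hp0.le)).add_const
      _).const_mul _
  · simp only [integral_const_mul, integral_add (hintn _) hw_int, integral_add hfw_int hw_int]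
    exact (hto.add_const _).const_mul _

/-- if `v_n ≥ 0`, `v_n → v` a.e., `∫|f(v_n)|^p → ∫|f(v)|^p < ∞` and
`v ∈ Lᵖ`, then `∫ |f(v_n − v)|^p → 0`. -/
theorem stmt17 (N : ℕ) (p : ℝ) (hp : 2 ≤ p) (f : ℝ → ℝ)
    (hodd : ∀ t : ℝ, f (-t) = - f t)
    (hf0 : f 0 = 0)
    (hf' : ∀ t : ℝ, HasDerivAt f ((1 + 2 ^ (p - 1) * |f t| ^ p) ^ (-(1 / p))) t)
    (v : ℕ → EuclideanSpace ℝ (Fin N) → ℝ) (w : EuclideanSpace ℝ (Fin N) → ℝ)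
    (hmeas : ∀ n, Measurable (v n)) (hwmeas : Measurable w)
    (hpos : ∀ n, ∀ x, 0 ≤ v n x)
    (hae : ∀ᵐ x : EuclideanSpace ℝ (Fin N) ∂volume,
      Filter.Tendsto (fun n => v n x) Filter.atTop (nhds (w x)))
    (hwLp : MemLp w (ENNReal.ofReal p) volume)
    (hintn : ∀ n, Integrable (fun x => |f (v n x)| ^ p))
    (hintw : Integrable (fun x => |f (w x)| ^ p))
    (hto : Filter.Tendsto (fun n => ∫ x, |f (v n x)| ^ p) Filter.atTop
      (nhds (∫ x, |f (w x)| ^ p))) :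
    Filter.Tendsto (fun n => ∫ x, |f (v n x - w x)| ^ p) Filter.atTop (nhds 0) :=
  stmt17_general N p hp f hf0 hf' v w hmeas hae hwLp hintn hto
end
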